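/- arXiv:2410.02058 — 2 statements merged into one kernel-verified Lean document; each statement's English description precedes it below -/
import Mathlib

section
/- Let Σ be a finite alphabet with at least two elements and let θ be a primitive substitution on Σ. Then there exists a constant C' > 0 such that for all integers n ≥ 1, the number β_{F[θ]}(n) of words of length at most n in the language F[θ] satisfies β_{F[θ]}(n) ≤ C'·n². -/
/-- The extension of a substitution `θ` to finite words, by concatenation:
`θ(w₁…w_m) = θ(w₁)…θ(w_m)`. -/
def substWord {α : Type*} (θ : α → List α) : List α → List α :=
  fun w => w.foldr (fun a acc => θ a ++ acc) []

/-- `θ` is a substitution: every letter maps to a nonempty word. -/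
def IsSubstitution {α : Type*} (θ : α → List α) : Prop := ∀ a, θ a ≠ []

/-- `θ` is primitive: there is `k ≥ 1` such that for all letters `a, b`,
the letter `b` occurs in `θ^k(a)`. -/
def IsPrimitiveSubst {α : Type*} (θ : α → List α) : Prop :=
  ∃ k, 1 ≤ k ∧ ∀ a b : α, b ∈ (substWord θ)^[k] [a]

/-- The language `F[θ]`: all nonempty factors (contiguous subwords) of the words
`θ^m(a)`, over all `m ≥ 1` and letters `a`. -/
def substLang {α : Type*} (θ : α → List α) : Set (List α) :=
  {w | w ≠ [] ∧ ∃ m, 1 ≤ m ∧ ∃ a : α, w <:+: (substWord θ)^[m] [a]}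


/-!
Replacing `θ` by `φ = θ^k` we may assume every letter occurs in every block `φ(a)`. Then
`φ^j(b)` is a factor of `φ^(j+1)(a)` for all letters `a, b`, so all blocks of a given level
have lengths within a factor `L = max |φ(a)|` of each other, and they grow at least like `2^j`.
Given `n`, take the first level `M` at which every block has length at least `n`; its blocks
have length at most `L² n`. A factor of length at most `n` of a word `φ^M(u)` lies within two
consecutive blocks, hence is a factor of one fixed word `φ^M(V)`, where `V` contains every
two-letter word. That word has length `O(n)`, so it has `O(n²)` factors.
-/

open Finset

section Substitution

variable {α : Type*}

theorem substWord_eq_flatMap (θ : α → List α) (w : List α) : substWord θ w = w.flatMap θ := by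
  induction w with
  | nil => rfl
  | cons a w ih => simp only [substWord, List.foldr_cons] at ih ⊢; rw [ih, List.flatMap_cons]

theorem substWord_singleton (θ : α → List α) (a : α) : substWord θ [a] = θ a := by
  simp [substWord_eq_flatMap]

theorem iterate_substWord_apply (θ : α → List α) (m : ℕ) (w : List α) :
    (substWord θ)^[m] w = w.flatMap fun a => (substWord θ)^[m] [a] := by
  induction m generalizing w with
  | zero => simp
  | succ m ih =>
    rw [Function.iterate_succ_apply, ih, substWord_eq_flatMap, List.flatMap_assoc]
    refine List.flatMap_congr fun a _ => ?_
    rw [Function.iterate_succ_apply, substWord_singleton, ih]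

theorem iterate_substWord_eq_substWord (θ : α → List α) (m : ℕ) :
    (substWord θ)^[m] = substWord (fun a => (substWord θ)^[m] [a]) := by
  funext w
  rw [iterate_substWord_apply, substWord_eq_flatMap]

theorem List.IsInfix.iterate_substWord {u v : List α} (h : u <:+: v) (θ : α → List α)
    (m : ℕ) : (substWord θ)^[m] u <:+: (substWord θ)^[m] v := by
  rw [iterate_substWord_eq_substWord, substWord_eq_flatMap, substWord_eq_flatMap]
  exact h.flatMap _

theorem length_substWord_le {θ : α → List α} {B : ℕ} (h : ∀ a, (θ a).length ≤ B)
    (u : List α) : (substWord θ u).length ≤ u.length * B := by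
  rw [substWord_eq_flatMap, List.length_flatMap, ← smul_eq_mul, ← List.length_map]
  exact List.sum_le_card_nsmul _ _ (by simpa using fun a _ => h a)

theorem length_substWord_ge {θ : α → List α} {B : ℕ} (h : ∀ a, B ≤ (θ a).length)
    (u : List α) : u.length * B ≤ (substWord θ u).length := by
  rw [substWord_eq_flatMap, List.length_flatMap, ← smul_eq_mul, ← List.length_map]
  exact List.card_nsmul_le_sum _ _ (by simpa using fun a _ => h a)

theorem exists_infix_append_of_infix_substWord {θ : α → List α} {w u : List α} (hw : w ≠ [])
    (hlen : ∀ a, w.length ≤ (θ a).length) (h : w <:+: substWord θ u) :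
    ∃ a b, w <:+: θ a ++ θ b := by
  induction u with
  | nil => exact absurd (List.eq_nil_of_infix_nil h) hw
  | cons a u ih =>
    rw [substWord_eq_flatMap, List.flatMap_cons, ← substWord_eq_flatMap] at h
    rcases List.infix_append_iff_ne_nil.mp h with h | h | ⟨s, p, -, hp, rfl, hs, hpu⟩
    · exact ⟨a, a, h.trans (List.prefix_append _ _).isInfix⟩
    · exact ih h
    · cases u with
      | nil => exact absurd (List.eq_nil_of_prefix_nil hpu) hp
      | cons b u =>
        rw [substWord_eq_flatMap, List.flatMap_cons] at hpu
        have hpb : p <+: θ b := List.prefix_of_prefix_length_le hpu (List.prefix_append _ _)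
          (le_trans (by simp) (hlen b))
        exact ⟨a, b, List.infix_append_iff.mpr (Or.inr (Or.inr ⟨s, p, rfl, hs, hpb⟩))⟩

theorem ncard_le_of_forall_isInfix {S : Set (List α)} {z : List α} (hS : ∀ w ∈ S, w <:+: z) :
    S.ncard ≤ (z.length + 1) ^ 2 := by
  classical
  set I := range (z.length + 1) ×ˢ range (z.length + 1)
  have hsub : S ⊆ (I.image fun p => (z.drop p.1).take p.2 : Finset (List α)) := by
    intro w hw
    obtain ⟨s, t, rfl⟩ := hS w hw
    refine mem_coe.2 (mem_image.2 ⟨(s.length, w.length), ?_, by simp⟩)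
    simp only [I, mem_product, mem_range, List.length_append]
    omega
  calc S.ncard ≤ (I.image fun p => (z.drop p.1).take p.2).card :=
        (Set.ncard_le_ncard hsub).trans (Set.ncard_coe_finset _).le
    _ ≤ I.card := card_image_le
    _ = (z.length + 1) ^ 2 := by simp [I, sq]

theorem exists_forall_pair_infix [Fintype α] : ∃ V : List α, ∀ a b, [a, b] <:+: V :=
  ⟨univ.toList.flatMap fun a => univ.toList.flatMap fun b => [a, b], fun a b =>
    (List.infix_flatMap_of_mem (mem_toList.2 (mem_univ b)) fun b => [a, b]).trans
      (List.infix_flatMap_of_mem (mem_toList.2 (mem_univ a))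
        fun a => univ.toList.flatMap fun b => [a, b])⟩

theorem card_le_length_of_forall_mem [Fintype α] {l : List α} (h : ∀ a, a ∈ l) :
    Fintype.card α ≤ l.length := by
  classical
  calc Fintype.card α = (univ : Finset α).card := card_univ.symm
    _ ≤ l.toFinset.card := card_le_card fun a _ => List.mem_toFinset.2 (h a)
    _ ≤ l.length := l.toFinset_card_le

end Substitution

section Blocks

variable {α : Type*} {φ : α → List α} {L : ℕ}

theorem length_iterate_le_length_iterate_succ {a b : α} (hab : b ∈ φ a) (j : ℕ) :
    ((substWord φ)^[j] [b]).length ≤ ((substWord φ)^[j + 1] [a]).length := by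
  rw [Function.iterate_succ_apply, substWord_singleton]
  exact (((List.singleton_infix_iff _ _).2 hab).iterate_substWord φ j).length_le

theorem length_iterate_succ_le (hL : ∀ a, (φ a).length ≤ L) {j B : ℕ}
    (hB : ∀ b, ((substWord φ)^[j] [b]).length ≤ B) (a : α) :
    ((substWord φ)^[j + 1] [a]).length ≤ L * B := by
  rw [Function.iterate_succ_apply, substWord_singleton, iterate_substWord_eq_substWord]
  exact (length_substWord_le hB _).trans (Nat.mul_le_mul_right _ (hL a))

theorem length_iterate_le_mul_length_iterate (hmem : ∀ a b, b ∈ φ a)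
    (hL : ∀ a, (φ a).length ≤ L) (j : ℕ) (a b : α) :
    ((substWord φ)^[j] [a]).length ≤ L * ((substWord φ)^[j] [b]).length := by
  cases j with
  | zero => simpa using Nat.one_le_of_lt ((List.length_pos_of_mem (hmem a a)).trans_le (hL a))
  | succ j => exact length_iterate_succ_le hL (fun c => length_iterate_le_length_iterate_succ
      (hmem b c) j) a

theorem two_pow_le_length_iterate (h2 : ∀ a, 2 ≤ (φ a).length) (j : ℕ) (a : α) :
    2 ^ j ≤ ((substWord φ)^[j] [a]).length := by
  induction j with
  | zero => simp
  | succ j ih =>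
    rw [Function.iterate_succ_apply', pow_succ]
    exact (Nat.mul_le_mul_right 2 ih).trans (length_substWord_ge h2 _)

theorem exists_iterate_length_bounds (hmem : ∀ a b, b ∈ φ a) (hL : ∀ a, (φ a).length ≤ L)
    (h2 : ∀ a, 2 ≤ (φ a).length) {n : ℕ} (hn : 1 ≤ n) :
    ∃ M, ∀ a, n ≤ ((substWord φ)^[M] [a]).length ∧
      ((substWord φ)^[M] [a]).length ≤ L ^ 2 * n := by
  classical
  have hex : ∃ M, ∀ a, n ≤ ((substWord φ)^[M] [a]).length :=
    ⟨n, fun a => n.lt_two_pow_self.le.trans (two_pow_le_length_iterate h2 n a)⟩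
  refine ⟨Nat.find hex, fun a => ⟨Nat.find_spec hex a, ?_⟩⟩
  cases hM : Nat.find hex with
  | zero =>
    have hL2 : 2 ≤ L := (h2 a).trans (hL a)
    simpa using Nat.one_le_iff_ne_zero.2 (by positivity : L ^ 2 * n ≠ 0)
  | succ j =>
    obtain ⟨b, hb⟩ : ∃ b, ((substWord φ)^[j] [b]).length < n := by
      simpa using Nat.find_min hex (hM ▸ j.lt_succ_self)
    have hblock : ∀ c, ((substWord φ)^[j] [c]).length ≤ L * n := fun c =>
      (length_iterate_le_mul_length_iterate hmem hL j c b).trans (Nat.mul_le_mul_left L hb.le)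
    calc ((substWord φ)^[j + 1] [a]).length ≤ L * (L * n) := length_iterate_succ_le hL hblock a
      _ = L ^ 2 * n := by ring

theorem singleton_infix_iterate_of_mem {a : α} (ha : a ∈ φ a) (M : ℕ) :
    [a] <:+: (substWord φ)^[M] [a] := by
  induction M with
  | zero => exact List.infix_refl _
  | succ M ih =>
    rw [Function.iterate_succ_apply, substWord_singleton]
    exact ih.trans (((List.singleton_infix_iff _ _).2 ha).iterate_substWord φ M)

theorem infix_iterate_of_infix_iterate {θ : α → List α} {k : ℕ}
    (hφ : substWord φ = (substWord θ)^[k]) (hself : ∀ a, a ∈ φ a) {w : List α} {m : ℕ}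
    {a : α} (hw : w <:+: (substWord θ)^[m] [a]) (M : ℕ) :
    w <:+: (substWord φ)^[M] ((substWord θ)^[m] [a]) := by
  have hcomm : Function.Commute (substWord φ)^[M] (substWord θ)^[m] := by
    rw [hφ]; exact (Function.Commute.iterate_iterate_self _ k m).iterate_left M
  rw [hcomm.eq]
  exact hw.trans ((singleton_infix_iterate_of_mem (hself a) M).iterate_substWord θ m)

theorem isInfix_iterate_of_mem_substLang {θ : α → List α} {k M n : ℕ} {V w : List α}
    (hφ : substWord φ = (substWord θ)^[k]) (hself : ∀ a, a ∈ φ a)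
    (hV : ∀ a b, [a, b] <:+: V) (hM : ∀ a, n ≤ ((substWord φ)^[M] [a]).length)
    (hwθ : w ∈ substLang θ) (hlen : w.length ≤ n) : w <:+: (substWord φ)^[M] V := by
  obtain ⟨hne, m, -, a, hw⟩ := hwθ
  have hwM := infix_iterate_of_infix_iterate hφ hself hw M
  rw [iterate_substWord_eq_substWord] at hwM
  obtain ⟨b, c, hbc⟩ :=
    exists_infix_append_of_infix_substWord hne (fun a => hlen.trans (hM a)) hwM
  have hpair : (substWord φ)^[M] [b, c] = (substWord φ)^[M] [b] ++ (substWord φ)^[M] [c] := by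
    rw [iterate_substWord_apply]; simp
  exact hbc.trans (hpair ▸ (hV b c).iterate_substWord φ M)

end Blocks

theorem stmt_1_general {A : Type*} [Fintype A] (hA : 2 ≤ Fintype.card A)
    (θ : A → List A) (hprim : IsPrimitiveSubst θ) :
    ∃ C' : ℝ, 0 < C' ∧ ∀ n : ℕ, 1 ≤ n →
      (({w ∈ substLang θ | w.length ≤ n}).ncard : ℝ) ≤ C' * n ^ 2 := by
  obtain ⟨k, -, hmem⟩ := hprim
  set φ : A → List A := fun a => (substWord θ)^[k] [a]
  have hφ : substWord φ = (substWord θ)^[k] := (iterate_substWord_eq_substWord θ k).symm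
  have h2 : ∀ a, 2 ≤ (φ a).length := fun a => hA.trans (card_le_length_of_forall_mem (hmem a))
  obtain ⟨L, hL⟩ : ∃ L, ∀ a, (φ a).length ≤ L :=
    ⟨univ.sup fun b => (φ b).length, fun a => le_sup (f := fun b => (φ b).length) (mem_univ a)⟩
  obtain ⟨V, hV⟩ := exists_forall_pair_infix (α := A)
  set C := V.length * L ^ 2
  refine ⟨((C + 1 : ℕ) : ℝ) ^ 2, by positivity, fun n hn => ?_⟩
  obtain ⟨M, hM⟩ := exists_iterate_length_bounds hmem hL h2 hn
  have hz : ((substWord φ)^[M] V).length ≤ C * n := by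
    rw [iterate_substWord_eq_substWord, mul_assoc]
    exact length_substWord_le (fun a => (hM a).2) V
  have hcount := ncard_le_of_forall_isInfix (S := {w ∈ substLang θ | w.length ≤ n})
    fun w hw => isInfix_iterate_of_mem_substLang hφ (fun a => hmem a a) hV (fun a => (hM a).1)
      hw.1 hw.2
  have hCn : C * n + 1 ≤ (C + 1) * n := by rw [add_one_mul]; omega
  calc (({w ∈ substLang θ | w.length ≤ n}).ncard : ℝ) ≤ (((C + 1) * n : ℕ) : ℝ) ^ 2 := by
        exact_mod_cast hcount.trans (Nat.pow_le_pow_left ((Nat.add_le_add_right hz 1).trans hCn) 2)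
    _ = ((C + 1 : ℕ) : ℝ) ^ 2 * n ^ 2 := by push_cast; ring

/-- For a primitive substitution on a finite alphabet with at least two letters, the
number of words of length at most `n` in `F[θ]` is at most `C'·n²`. -/
theorem stmt_1 {A : Type*} [Fintype A] (hA : 2 ≤ Fintype.card A)
    (θ : A → List A) (hsub : IsSubstitution θ) (hprim : IsPrimitiveSubst θ) :
    ∃ C' : ℝ, 0 < C' ∧ ∀ n : ℕ, 1 ≤ n →
      (({w ∈ substLang θ | w.length ≤ n}).ncard : ℝ) ≤ C' * n ^ 2 :=
  stmt_1_general hA θ hprim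
end

section
/- Let Σ be a finite alphabet equipped with a fixed-point-free involution inv, and let θ be an inversion-equivariant substitution on Σ. Assume θ is primitive up to inversion, i.e. there exists k₀ ≥ 1 such that for all letters a, b, at least one of b or inv(b) occurs in θ^{k₀}(a). Assume moreover that θ is non-orientable: there exist letters e and e' such that both e and inv(e) occur in the word θ(e'). Then there exists k ≥ 1 such that for all letters a, b, both b and inv(b) occur in θ^{k}(a). -/
section Aux

variable {A : Type*} (θ : A → List A)

lemma substWord_nil' : substWord θ [] = [] := rfl

lemma substWord_cons' (a : A) (u : List A) :
    substWord θ (a :: u) = θ a ++ substWord θ u := rfl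

lemma substWord_append' (u v : List A) :
    substWord θ (u ++ v) = substWord θ u ++ substWord θ v := by
  induction u with
  | nil => rfl
  | cons a u ih =>
    rw [List.cons_append, substWord_cons', substWord_cons', ih, List.append_assoc]

lemma mem_substWord_of_mem' {a b : A} {w : List A} (ha : a ∈ w) (hb : b ∈ θ a) :
    b ∈ substWord θ w := by
  induction w with
  | nil => cases ha
  | cons c w ih =>
    rw [substWord_cons', List.mem_append]
    rcases List.mem_cons.1 ha with h | h
    · left; rwa [h] at hb
    · right; exact ih h

lemma mem_comp' {a c x : A} {m n : ℕ}
    (hc : c ∈ (substWord θ)^[m] [a]) (hx : x ∈ (substWord θ)^[n] [c]) :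
    x ∈ (substWord θ)^[m + n] [a] := by
  induction n generalizing x with
  | zero =>
    simp only [Function.iterate_zero, id_eq, List.mem_singleton] at hx
    subst hx
    simpa using hc
  | succ n ih =>
    rw [Function.iterate_succ_apply'] at hx
    rw [← Nat.add_assoc, Function.iterate_succ_apply']
    -- hx : x ∈ substWord θ ((substWord θ)^[n] [c])
    -- need x ∈ substWord θ ((substWord θ)^[m+n] [a])
    -- find letter y with y ∈ S^n [c] and x ∈ θ y
    obtain ⟨u, y, v, hsplit, hxy⟩ : ∃ u y v, (substWord θ)^[n] [c] = u ++ y :: v ∧ x ∈ θ y := by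
      generalize (substWord θ)^[n] [c] = w at hx
      induction w with
      | nil => cases hx
      | cons d w ihw =>
        rw [substWord_cons', List.mem_append] at hx
        rcases hx with h | h
        · exact ⟨[], d, w, rfl, h⟩
        · obtain ⟨u, y, v, h1, h2⟩ := ihw h
          exact ⟨d :: u, y, v, by rw [h1]; rfl, h2⟩
    have hy : y ∈ (substWord θ)^[n] [c] := by rw [hsplit]; simp
    have hy' : y ∈ (substWord θ)^[m + n] [a] := ih hy
    exact mem_substWord_of_mem' θ hy' hxy

variable (inv : A → A)

lemma substWord_equiv' (hequiv : ∀ a : A, θ (inv a) = ((θ a).map inv).reverse)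
    (w : List A) :
    substWord θ ((w.map inv).reverse) = ((substWord θ w).map inv).reverse := by
  induction w with
  | nil => rfl
  | cons a w ih =>
    simp only [List.map_cons, List.reverse_cons, substWord_append', ih, substWord_cons',
      List.map_append, List.reverse_append]
    rw [substWord_nil', List.append_nil, hequiv]

lemma iterate_equiv' (hequiv : ∀ a : A, θ (inv a) = ((θ a).map inv).reverse)
    (n : ℕ) (w : List A) :
    (substWord θ)^[n] ((w.map inv).reverse) = (((substWord θ)^[n] w).map inv).reverse := by
  induction n generalizing w with
  | zero => rfl
  | succ n ih =>
    rw [Function.iterate_succ_apply, Function.iterate_succ_apply,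
      substWord_equiv' θ inv hequiv, ih]

lemma mem_iterate_inv' (hequiv : ∀ a : A, θ (inv a) = ((θ a).map inv).reverse)
    {n : ℕ} {a x : A} (hx : x ∈ (substWord θ)^[n] [a]) :
    inv x ∈ (substWord θ)^[n] [inv a] := by
  have h : ([a].map inv).reverse = [inv a] := rfl
  rw [← h, iterate_equiv' θ inv hequiv]
  simp only [List.mem_reverse, List.mem_map]
  exact ⟨x, hx, rfl⟩

end Aux

/-- If an inversion-equivariant substitution on a finite alphabet with a fixed-point-free
involution is primitive up to inversion and non-orientable (some `θ(e')` contains both a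
letter `e` and its inverse), then some power `θ^k` maps every letter to a word containing
every letter together with its inverse. -/
theorem stmt_12 {A : Type*} [Fintype A] (inv : A → A)
    (hinvol : Function.Involutive inv) (hfpf : ∀ a : A, inv a ≠ a)
    (θ : A → List A) (hsub : IsSubstitution θ)
    (hequiv : ∀ a : A, θ (inv a) = ((θ a).map inv).reverse)
    (hprim : ∃ k₀ : ℕ, 1 ≤ k₀ ∧ ∀ a b : A,
      b ∈ (substWord θ)^[k₀] [a] ∨ inv b ∈ (substWord θ)^[k₀] [a])
    (hnonor : ∃ e e' : A, e ∈ θ e' ∧ inv e ∈ θ e') :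
    ∃ k : ℕ, 1 ≤ k ∧ ∀ a b : A,
      b ∈ (substWord θ)^[k] [a] ∧ inv b ∈ (substWord θ)^[k] [a] := by
  obtain ⟨k₀, hk₀, hp⟩ := hprim
  obtain ⟨e, e', he, hie⟩ := hnonor
  -- both e and inv e occur in θ (inv e') too
  have hie' : inv e ∈ θ (inv e') := by
    rw [hequiv, List.mem_reverse, List.mem_map]; exact ⟨e, he, rfl⟩
  have he' : e ∈ θ (inv e') := by
    rw [hequiv, List.mem_reverse, List.mem_map]
    exact ⟨inv e, hie, hinvol e⟩
  -- for every a, both e and inv e occur in θ^(k₀+1) a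
  have hstep : ∀ a : A, e ∈ (substWord θ)^[k₀ + 1] [a] ∧
      inv e ∈ (substWord θ)^[k₀ + 1] [a] := by
    intro a
    rw [Function.iterate_succ_apply']
    rcases hp a e' with h | h
    · exact ⟨mem_substWord_of_mem' θ h he, mem_substWord_of_mem' θ h hie⟩
    · exact ⟨mem_substWord_of_mem' θ h he', mem_substWord_of_mem' θ h hie'⟩
  refine ⟨k₀ + 1 + k₀, by omega, fun a b => ?_⟩
  obtain ⟨h1, h2⟩ := hstep a
  rcases hp e b with h | h
  · have h' : inv b ∈ (substWord θ)^[k₀] [inv e] := mem_iterate_inv' θ inv hequiv h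
    exact ⟨mem_comp' θ h1 h, mem_comp' θ h2 h'⟩
  · have h' : inv (inv b) ∈ (substWord θ)^[k₀] [inv e] := mem_iterate_inv' θ inv hequiv h
    rw [hinvol b] at h'
    exact ⟨mem_comp' θ h2 h', mem_comp' θ h1 h⟩
end
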